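/- Let G be an undirected graph on {1,…,n} with edge set E, d ≥ 1, and for each edge {i,j} let u*_{ij} ∈ ℝ^d be a unit vector with u*_{ji} = −u*_{ij}. Suppose x : [0,T] → (ℝ^d)^n is differentiable, satisfies xᵢ′(t) = ∑_{j ∈ N_i}(u_{ij}(x(t)) − u*_{ij}) for all i and t, and x_i(t) ≠ x_j(t) for every edge {i,j} and every t ∈ [0,T]. Then with ψ(x) = ∑_{{i,j} ∈ E} (1/2)‖x_j − x_i‖·‖u_{ij}(x) − u*_{ij}‖², the function t ↦ ψ(x(t)) is differentiable with derivative −∑_{i=1}^n ‖xᵢ′(t)‖² ≤ 0; in particular ψ(x(t)) is nonincreasing. -/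

import Mathlib

open Finset

/-- The bearing from agent `i` to agent `j`: the unit vector pointing from `x i` to `x j`,
or `0` when the agents coincide. -/
noncomputable def bearing {d n : ℕ} (x : Fin n → EuclideanSpace ℝ (Fin d)) (i j : Fin n) :
    EuclideanSpace ℝ (Fin d) :=
  ‖x j - x i‖⁻¹ • (x j - x i)

/-- The bearing-only formation control field `F(x)_i = ∑_{j ∈ N_i} (u_{ij}(x) - u*_{ij})`. -/
noncomputable def formField {d n : ℕ} (G : SimpleGraph (Fin n)) [DecidableRel G.Adj]
    (ustar : Fin n → Fin n → EuclideanSpace ℝ (Fin d))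
    (x : Fin n → EuclideanSpace ℝ (Fin d)) (i : Fin n) : EuclideanSpace ℝ (Fin d) :=
  ∑ j ∈ G.neighborFinset i, (bearing x i j - ustar i j)

/-- The formation potential `ψ(x) = ∑_{{i,j} ∈ E} (1/2) ‖x_j - x_i‖ ‖u_{ij}(x) - u*_{ij}‖²`,
with each unordered edge counted once (hence half the sum over ordered adjacent pairs;
the summand is symmetric in `i, j` since `u*_{ji} = -u*_{ij}`). -/
noncomputable def formPotential {d n : ℕ} (G : SimpleGraph (Fin n)) [DecidableRel G.Adj]
    (ustar : Fin n → Fin n → EuclideanSpace ℝ (Fin d))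
    (x : Fin n → EuclideanSpace ℝ (Fin d)) : ℝ :=
  (1 / 2) * ∑ i, ∑ j ∈ G.neighborFinset i,
    (1 / 2) * ‖x j - x i‖ * ‖bearing x i j - ustar i j‖ ^ 2

/-!
When adjacent agents are distinct, `‖u_{ij} - u*_{ij}‖² = 2 - 2 ⟪u_{ij}, u*_{ij}⟫` for unit
vectors, so each edge term of `ψ` equals `‖x_j - x_i‖ - ⟪x_j - x_i, u*_{ij}⟫`, whose gradient in
`x_j - x_i` is `g_{ij} = u_{ij} - u*_{ij}`. Along the flow `ẋ_i = F_i = ∑_{j ∈ N_i} g_{ij}` the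
time derivative of `ψ` is therefore `½ ∑_i ∑_{j ∈ N_i} ⟪g_{ij}, F_j - F_i⟫`; since `g` is
antisymmetric, exchanging `i` and `j` in the `F_j` part turns this into `-∑_i ‖F_i‖²`.
Monotonicity then follows from the mean value theorem.
-/

open Finset Filter Topology
open scoped RealInnerProductSpace

section InnerProductSpace

variable {E : Type*} [NormedAddCommGroup E] [InnerProductSpace ℝ E]

lemma HasDerivAt.norm_of_ne_zero {c : ℝ → E} {c' : E} {t : ℝ} (hc : HasDerivAt c c' t)
    (h : c t ≠ 0) : HasDerivAt (fun s => ‖c s‖) (⟪c t, c'⟫ / ‖c t‖) t := by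
  have hsq : HasDerivAt (fun s => √(‖c s‖ ^ 2)) (2 * ⟪c t, c'⟫ / (2 * √(‖c t‖ ^ 2))) t :=
    hc.norm_sq.sqrt (by positivity)
  simpa only [Real.sqrt_sq (norm_nonneg _), mul_div_mul_left _ _ (two_ne_zero' ℝ)] using hsq

lemma HasDerivAt.norm_sub_inner {c : ℝ → E} {c' : E} {t : ℝ} (hc : HasDerivAt c c' t)
    (h : c t ≠ 0) (u : E) :
    HasDerivAt (fun s => ‖c s‖ - ⟪c s, u⟫) ⟪‖c t‖⁻¹ • c t - u, c'⟫ t := by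
  have hinner : HasDerivAt (fun s => ⟪c s, u⟫) ⟪c', u⟫ t := by
    simpa using hc.inner ℝ (hasDerivAt_const t u)
  refine ((hc.norm_of_ne_zero h).sub hinner).congr_deriv ?_
  rw [inner_sub_left, real_inner_smul_left, real_inner_comm u, div_eq_inv_mul]

lemma half_mul_norm_mul_norm_inv_smul_sub_sq {e u : E} (he : e ≠ 0) (hu : ‖u‖ = 1) :
    1 / 2 * ‖e‖ * ‖‖e‖⁻¹ • e - u‖ ^ 2 = ‖e‖ - ⟪e, u⟫ := by
  have hne : ‖e‖ ≠ 0 := norm_ne_zero_iff.mpr he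
  have hunit : ‖‖e‖⁻¹ • e‖ = 1 := by rw [norm_smul, norm_inv, norm_norm, inv_mul_cancel₀ hne]
  rw [norm_sub_sq_real, hunit, hu, real_inner_smul_left]
  field_simp
  ring

end InnerProductSpace

namespace SimpleGraph

variable {V : Type*} [Fintype V] (G : SimpleGraph V) [DecidableRel G.Adj]

lemma sum_sum_neighborFinset_swap {M : Type*} [AddCommMonoid M] (f : V → V → M) :
    ∑ i, ∑ j ∈ G.neighborFinset i, f i j = ∑ i, ∑ j ∈ G.neighborFinset i, f j i := by
  simp only [neighborFinset_eq_filter, sum_filter]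
  rw [sum_comm]
  exact sum_congr rfl fun i _ => sum_congr rfl fun j _ => if_congr (G.adj_comm j i) rfl rfl

lemma sum_sum_inner_sub_eq_neg_two_mul {E : Type*} [NormedAddCommGroup E]
    [InnerProductSpace ℝ E] (g : V → V → E) (hg : ∀ i j, G.Adj i j → g j i = -g i j)
    (F : V → E) (hF : ∀ i, F i = ∑ j ∈ G.neighborFinset i, g i j) :
    ∑ i, ∑ j ∈ G.neighborFinset i, ⟪g i j, F j - F i⟫ = -2 * ∑ i, ‖F i‖ ^ 2 := by
  have hswap : ∑ i, ∑ j ∈ G.neighborFinset i, ⟪g i j, F j⟫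
      = -∑ i, ∑ j ∈ G.neighborFinset i, ⟪g i j, F i⟫ := by
    rw [G.sum_sum_neighborFinset_swap (fun i j => ⟪g i j, F j⟫)]
    simp only [← sum_neg_distrib]
    refine sum_congr rfl fun i _ => sum_congr rfl fun j hj => ?_
    rw [hg i j ((G.mem_neighborFinset i j).mp hj), inner_neg_left]
  have hdiv : ∀ i, ∑ j ∈ G.neighborFinset i, ⟪g i j, F i⟫ = ‖F i‖ ^ 2 := fun i => by
    rw [← sum_inner, ← hF i, real_inner_self_eq_norm_sq]
  simp only [inner_sub_right, sum_sub_distrib, hswap, hdiv]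
  ring

end SimpleGraph

lemma SimpleGraph.eventually_forall_adj_ne {V E : Type*} [Finite V] [TopologicalSpace E]
    [T2Space E] (G : SimpleGraph V) {x : ℝ → V → E} {t : ℝ}
    (hx : ∀ i, ContinuousAt (fun s => x s i) t)
    (hne : ∀ i j, G.Adj i j → x t i ≠ x t j) :
    ∀ᶠ s in 𝓝 t, ∀ i j, G.Adj i j → x s i ≠ x s j := by
  simp only [eventually_all]
  intro i j hij
  have hpair : ContinuousAt (fun s => (x s i, x s j)) t := (hx i).prodMk_nhds (hx j)
  exact hpair.eventually (isClosed_diagonal.isOpen_compl.mem_nhds (hne i j hij))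

section Formation

variable {d n : ℕ}

lemma bearing_swap (x : Fin n → EuclideanSpace ℝ (Fin d)) (i j : Fin n) :
    bearing x j i = -bearing x i j := by
  rw [bearing, bearing, ← neg_sub, norm_neg, smul_neg]

lemma formPotential_eq_sum_norm_sub_inner (G : SimpleGraph (Fin n)) [DecidableRel G.Adj]
    (ustar : Fin n → Fin n → EuclideanSpace ℝ (Fin d))
    (hunit : ∀ i j, G.Adj i j → ‖ustar i j‖ = 1)
    (y : Fin n → EuclideanSpace ℝ (Fin d)) (hy : ∀ i j, G.Adj i j → y i ≠ y j) :
    formPotential G ustar y =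
      1 / 2 * ∑ i, ∑ j ∈ G.neighborFinset i, (‖y j - y i‖ - ⟪y j - y i, ustar i j⟫) := by
  refine congrArg _ (sum_congr rfl fun i _ => sum_congr rfl fun j hj => ?_)
  rw [G.mem_neighborFinset] at hj
  exact half_mul_norm_mul_norm_inv_smul_sub_sq (sub_ne_zero.mpr (hy i j hj).symm) (hunit i j hj)

lemma hasDerivAt_formPotential (G : SimpleGraph (Fin n)) [DecidableRel G.Adj]
    (ustar : Fin n → Fin n → EuclideanSpace ℝ (Fin d))
    (hunit : ∀ i j, G.Adj i j → ‖ustar i j‖ = 1)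
    (hskew : ∀ i j, G.Adj i j → ustar j i = -ustar i j)
    (x : ℝ → Fin n → EuclideanSpace ℝ (Fin d)) (t : ℝ)
    (hode : ∀ i, HasDerivAt (fun s => x s i) (formField G ustar (x t) i) t)
    (hfree : ∀ i j, G.Adj i j → x t i ≠ x t j) :
    HasDerivAt (fun s => formPotential G ustar (x s))
      (-(∑ i, ‖formField G ustar (x t) i‖ ^ 2)) t := by
  set F := formField G ustar (x t)
  have hlocal : (fun s => formPotential G ustar (x s)) =ᶠ[𝓝 t] fun s =>
      1 / 2 * ∑ i, ∑ j ∈ G.neighborFinset i, (‖x s j - x s i‖ - ⟪x s j - x s i, ustar i j⟫) := by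
    filter_upwards [G.eventually_forall_adj_ne (fun i => (hode i).continuousAt) hfree] with s hs
    exact formPotential_eq_sum_norm_sub_inner G ustar hunit (x s) hs
  have hedge : ∀ i, ∀ j ∈ G.neighborFinset i,
      HasDerivAt (fun s => ‖x s j - x s i‖ - ⟪x s j - x s i, ustar i j⟫)
        ⟪bearing (x t) i j - ustar i j, F j - F i⟫ t := fun i j hj =>
    ((hode j).sub (hode i)).norm_sub_inner
      (sub_ne_zero.mpr (hfree i j ((G.mem_neighborFinset i j).mp hj)).symm) _
  have hflow : ∑ i, ∑ j ∈ G.neighborFinset i, ⟪bearing (x t) i j - ustar i j, F j - F i⟫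
      = -2 * ∑ i, ‖F i‖ ^ 2 :=
    G.sum_sum_inner_sub_eq_neg_two_mul _
      (fun i j h => by rw [bearing_swap, hskew i j h, neg_sub_neg, neg_sub]) F fun _ => rfl
  rw [hlocal.hasDerivAt_iff]
  refine ((HasDerivAt.fun_sum fun i _ => HasDerivAt.fun_sum (hedge i)).const_mul
    (1 / 2)).congr_deriv ?_
  rw [hflow]
  ring

end Formation

theorem stmt_10_general {d n : ℕ}
    (G : SimpleGraph (Fin n)) [DecidableRel G.Adj]
    (ustar : Fin n → Fin n → EuclideanSpace ℝ (Fin d))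
    (hunit : ∀ i j, G.Adj i j → ‖ustar i j‖ = 1)
    (hskew : ∀ i j, G.Adj i j → ustar j i = -ustar i j)
    (T : ℝ)
    (x : ℝ → Fin n → EuclideanSpace ℝ (Fin d))
    (hode : ∀ i, ∀ t ∈ Set.Icc (0 : ℝ) T,
      HasDerivAt (fun s => x s i) (formField G ustar (x t) i) t)
    (hfree : ∀ t ∈ Set.Icc (0 : ℝ) T, ∀ i j, G.Adj i j → x t i ≠ x t j) :
    (∀ t ∈ Set.Icc (0 : ℝ) T,
      HasDerivAt (fun s => formPotential G ustar (x s))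
        (-(∑ i, ‖formField G ustar (x t) i‖ ^ 2)) t) ∧
    (∀ s ∈ Set.Icc (0 : ℝ) T, ∀ t ∈ Set.Icc (0 : ℝ) T, s ≤ t →
      formPotential G ustar (x t) ≤ formPotential G ustar (x s)) := by
  have hderiv : ∀ t ∈ Set.Icc (0 : ℝ) T, HasDerivAt (fun s => formPotential G ustar (x s))
      (-(∑ i, ‖formField G ustar (x t) i‖ ^ 2)) t := fun t ht =>
    hasDerivAt_formPotential G ustar hunit hskew x t (fun i => hode i t ht) (hfree t ht)
  refine ⟨hderiv, fun s hs t ht hst => ?_⟩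
  exact antitoneOn_of_hasDerivWithinAt_nonpos (convex_Icc 0 T)
    (fun u hu => (hderiv u hu).continuousAt.continuousWithinAt)
    (fun u hu => (hderiv u (interior_subset hu)).hasDerivWithinAt)
    (fun u _ => neg_nonpos.mpr (sum_nonneg fun i _ => sq_nonneg _)) hs ht hst

theorem stmt_10 {d n : ℕ} (hd : 1 ≤ d)
    (G : SimpleGraph (Fin n)) [DecidableRel G.Adj]
    (ustar : Fin n → Fin n → EuclideanSpace ℝ (Fin d))
    (hunit : ∀ i j, G.Adj i j → ‖ustar i j‖ = 1)
    (hskew : ∀ i j, G.Adj i j → ustar j i = -ustar i j)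
    (T : ℝ) (hT : 0 ≤ T)
    (x : ℝ → Fin n → EuclideanSpace ℝ (Fin d))
    (hode : ∀ i, ∀ t ∈ Set.Icc (0 : ℝ) T,
      HasDerivAt (fun s => x s i) (formField G ustar (x t) i) t)
    (hfree : ∀ t ∈ Set.Icc (0 : ℝ) T, ∀ i j, G.Adj i j → x t i ≠ x t j) :
    (∀ t ∈ Set.Icc (0 : ℝ) T,
      HasDerivAt (fun s => formPotential G ustar (x s))
        (-(∑ i, ‖formField G ustar (x t) i‖ ^ 2)) t) ∧
    (∀ s ∈ Set.Icc (0 : ℝ) T, ∀ t ∈ Set.Icc (0 : ℝ) T, s ≤ t →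
      formPotential G ustar (x t) ≤ formPotential G ustar (x s)) :=
  stmt_10_general G ustar hunit hskew T x hode hfree
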